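/- arXiv:1909.04233 — 3 statements merged into one kernel-verified Lean document; each statement's English description precedes it below -/
import Mathlib

section
/- For a smooth complex-valued function f on ℝ², at every point where f ≠ 0, the pointwise inequality |∂_z̄|f|| ≤ (1/2)(|Df| + |D*f|) holds, where D = -2∂_z̄ - (b/2)z and D* = 2∂_z - (b/2)z̄. -/
open Complex

/-- Wirtinger derivative `∂_z f = (∂_{x¹}f - i ∂_{x²}f)/2`. -/
noncomputable def dz (f : ℂ → ℂ) (z : ℂ) : ℂ :=
  (fderiv ℝ f z 1 - Complex.I * fderiv ℝ f z Complex.I) / 2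

/-- Wirtinger derivative `∂_z̄ f = (∂_{x¹}f + i ∂_{x²}f)/2`. -/
noncomputable def dzbar (f : ℂ → ℂ) (z : ℂ) : ℂ :=
  (fderiv ℝ f z 1 + Complex.I * fderiv ℝ f z Complex.I) / 2

/-- Annihilation operator `D = -2∂_z̄ - (b/2)z`. -/
noncomputable def Dop (b : ℝ) (f : ℂ → ℂ) : ℂ → ℂ :=
  fun z => -2 * dzbar f z - (b / 2 : ℂ) * z * f z

/-- Creation operator `D* = 2∂_z - (b/2)z̄`. -/
noncomputable def Dstarop (b : ℝ) (f : ℂ → ℂ) : ℂ → ℂ :=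
  fun z => 2 * dz f z - (b / 2 : ℂ) * (starRingEnd ℂ z) * f z

/-- Diamagnetic (Kato-type) pointwise inequality: at points where `f ≠ 0`,
`|∂_z̄|f|| ≤ (1/2)(|Df| + |D*f|)`. -/
theorem kato_pointwise_inequality (b : ℝ) (hb : 0 < b) (f : ℂ → ℂ)
    (hf : ContDiff ℝ (⊤ : ℕ∞) f) (z : ℂ) (hz : f z ≠ 0) :
    ‖dzbar (fun w => ((‖f w‖ : ℝ) : ℂ)) z‖
      ≤ (1 / 2) * (‖Dop b f z‖ + ‖Dstarop b f z‖) := by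
  have hd : DifferentiableAt ℝ f z := (hf.differentiable (by simp)) z
  set L := fderiv ℝ f z with hL
  have hfd : HasFDerivAt f L z := hd.hasFDerivAt
  set a := f z with ha
  have hre : HasFDerivAt (fun w => (f w).re) (Complex.reCLM.comp L) z :=
    (Complex.reCLM.hasFDerivAt).comp z hfd
  have him : HasFDerivAt (fun w => (f w).im) (Complex.imCLM.comp L) z :=
    (Complex.imCLM.hasFDerivAt).comp z hfd
  -- derivative of normSq ∘ f
  have hn : HasFDerivAt (fun w => (f w).re * (f w).re + (f w).im * (f w).im)
      ((a.re • (Complex.reCLM.comp L) + a.re • (Complex.reCLM.comp L)) +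
        (a.im • (Complex.imCLM.comp L) + a.im • (Complex.imCLM.comp L))) z :=
    (hre.mul hre).add (him.mul him)
  have hN0 : (a.re * a.re + a.im * a.im) ≠ 0 := by
    have := Complex.normSq_pos.mpr hz
    rw [Complex.normSq_apply] at this
    exact ne_of_gt this
  have hsq := hn.sqrt hN0
  have habs : ∀ w : ℂ, ‖f w‖ =
      Real.sqrt ((f w).re * (f w).re + (f w).im * (f w).im) := by
    intro w
    rw [Complex.norm_def, Complex.normSq_apply]
  have hg : HasFDerivAt (fun w => ((‖f w‖ : ℝ) : ℂ))
      (Complex.ofRealCLM.comp ((1 / (2 * Real.sqrt (a.re * a.re + a.im * a.im))) •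
        ((a.re • (Complex.reCLM.comp L) + a.re • (Complex.reCLM.comp L)) +
          (a.im • (Complex.imCLM.comp L) + a.im • (Complex.imCLM.comp L))))) z := by
    have := (Complex.ofRealCLM.hasFDerivAt).comp z hsq
    simp only [habs]; exact this
  set r := ‖a‖ with hr
  have hr0 : 0 < r := norm_pos_iff.mpr hz
  have hrs : Real.sqrt (a.re * a.re + a.im * a.im) = r := (habs z).symm
  set u := L 1 with hu
  set v := L Complex.I with hv
  set A := Dop b f z with hA
  set B := Dstarop b f z with hB
  -- key identity for the complex "gradient" combination
  have key : a * (starRingEnd ℂ) B - (starRingEnd ℂ) a * A =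
      (((2 * (a.re * u.re + a.im * u.im) : ℝ)) : ℂ) +
        Complex.I * (((2 * (a.re * v.re + a.im * v.im) : ℝ)) : ℂ) := by
    have hAe : A = -(u + Complex.I * v) - (b / 2 : ℂ) * z * a := by
      simp only [hA, Dop, dzbar, ← hL, ← hu, ← hv, ← ha]; ring
    have hBe : B = (u - Complex.I * v) - (b / 2 : ℂ) * (starRingEnd ℂ) z * a := by
      simp only [hB, Dstarop, dz, ← hL, ← hu, ← hv, ← ha]; ring
    rw [hAe, hBe]
    apply Complex.ext <;>
      simp [Complex.mul_re, Complex.mul_im, Complex.div_re, Complex.div_im,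
        Complex.normSq_apply] <;> ring
  -- compute dzbar of |f|
  have hdzbar : dzbar (fun w => ((‖f w‖ : ℝ) : ℂ)) z =
      (a * (starRingEnd ℂ) B - (starRingEnd ℂ) a * A) / (4 * (r : ℂ)) := by
    rw [dzbar, hg.fderiv, key]
    simp only [ContinuousLinearMap.comp_apply, ContinuousLinearMap.smul_apply,
      ContinuousLinearMap.add_apply, Complex.ofRealCLM_apply, Complex.reCLM_apply,
      Complex.imCLM_apply, smul_eq_mul, hrs, ← hu, ← hv]
    have hrne : (r : ℂ) ≠ 0 := by exact_mod_cast ne_of_gt hr0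
    field_simp
    push_cast
    ring_nf
    simp only [mul_inv_cancel_right₀ hrne]
  rw [hdzbar, norm_div]
  have h4 : ‖4 * (r : ℂ)‖ = 4 * r := by
    rw [norm_mul, Complex.norm_real, Real.norm_of_nonneg hr0.le]
    norm_num
  have hE : ‖a * (starRingEnd ℂ) B - (starRingEnd ℂ) a * A‖
      ≤ r * ‖B‖ + r * ‖A‖ := by
    refine le_trans (norm_sub_le _ _) ?_
    rw [norm_mul, norm_mul, Complex.norm_conj, Complex.norm_conj, ← hr]
  rw [h4, div_le_iff₀ (by positivity : (0:ℝ) < 4 * r)]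
  nlinarith [hE, norm_nonneg A, norm_nonneg B, hr0.le]
end

section
/- For e_{0k}(z) = z^k exp(−b|z|²/4)/sqrt(π k! (2/b)^{k+1}), the gradient L² norm satisfies ‖∇e_{0k}‖_{L²(ℝ²)} = sqrt((k+1)b/2), which tends to infinity as k → ∞, even though ‖D e_{0k}‖_{L²} = 0. -/
open Complex

open Real MeasureTheory

/-- The normalized lowest Landau level states. -/
noncomputable def e0 (b : ℝ) (j : ℕ) (z : ℂ) : ℂ :=
  z ^ j * Complex.exp (-(b : ℂ) * ((‖z‖ : ℝ) : ℂ) ^ 2 / 4) /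
    ((Real.sqrt (π * (Nat.factorial j : ℝ) * (2 / b) ^ (j + 1)) : ℝ) : ℂ)

lemma key_alg (bC : ℂ) (k : ℕ) (z w s : ℂ) (hs : z * w = s) :
    ((k:ℂ) * z^(k-1) - bC/4 * z^k * (z + w)) * ((k:ℂ) * w^(k-1) - bC/4 * w^k * (w + z))
      + ((k:ℂ) * z^(k-1) - bC/4 * z^k * (w - z)) * ((k:ℂ) * w^(k-1) - bC/4 * w^k * (z - w))
    = 2 * (k:ℂ)^2 * s^(k-1) - (k:ℂ) * bC * s^k + bC^2/4 * s^(k+1) := by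
  subst hs
  cases k with
  | zero => push_cast; ring
  | succ j => push_cast [Nat.add_sub_cancel]; ring

lemma e0_eq' (b : ℝ) (k : ℕ) :
    e0 b k = fun z => z ^ k * Complex.exp (-(b:ℂ)/4 * (z * (starRingEnd ℂ) z)) *
      (((Real.sqrt (π * (Nat.factorial k : ℝ) * (2 / b) ^ (k + 1)) : ℝ) : ℂ))⁻¹ := by
  funext z
  rw [e0, ← Complex.ofReal_pow, Complex.sq_norm, Complex.mul_conj, div_eq_mul_inv]
  ring_nf

lemma e0_fderiv (b : ℝ) (k : ℕ) (z v : ℂ) :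
    fderiv ℝ (e0 b k) z v =
      ((k : ℂ) * z ^ (k - 1) * v
        - (b:ℂ)/4 * z ^ k * (z * (starRingEnd ℂ) v + (starRingEnd ℂ) z * v)) *
        Complex.exp (-(b : ℂ)/4 * (z * (starRingEnd ℂ) z)) /
      ((Real.sqrt (π * (Nat.factorial k : ℝ) * (2 / b) ^ (k + 1)) : ℝ) : ℂ) := by
  set c : ℂ := ((Real.sqrt (π * (Nat.factorial k : ℝ) * (2 / b) ^ (k + 1)) : ℝ) : ℂ) with hc
  have hconj : HasFDerivAt (fun w : ℂ => (starRingEnd ℂ) w)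
      (Complex.conjCLE.toContinuousLinearMap) z := Complex.conjCLE.hasFDerivAt
  have hu : HasFDerivAt (fun w : ℂ => w * (starRingEnd ℂ) w)
      (z • Complex.conjCLE.toContinuousLinearMap
        + ((starRingEnd ℂ) z) • ContinuousLinearMap.id ℝ ℂ) z :=
    (hasFDerivAt_id z).mul hconj
  have hw := (hu.const_mul (-(b:ℂ)/4)).cexp
  have hpow := ((hasDerivAt_pow k z).hasFDerivAt).restrictScalars ℝ
  have hdiv := (hpow.mul hw).mul_const c⁻¹
  have h0 : fderiv ℝ (fun z : ℂ => z ^ k * Complex.exp (-(b:ℂ)/4 * (z * (starRingEnd ℂ) z)) * c⁻¹) z = _ := hdiv.fderiv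
  rw [e0_eq', ← hc, h0]
  simp only [ContinuousLinearMap.smul_apply, ContinuousLinearMap.add_apply,
    ContinuousLinearMap.coe_smul', Pi.smul_apply, ContinuousLinearMap.coe_restrictScalars',
    ContinuousLinearMap.smulRight_apply, ContinuousLinearMap.one_apply,
    ContinuousLinearMap.id_apply, ContinuousLinearEquiv.coe_coe, Complex.conjCLE_apply,
    smul_eq_mul, ContinuousLinearMap.toSpanSingleton_apply]
  field_simp
  ring

lemma grad_sq (b : ℝ) (hb : 0 < b) (k : ℕ) (z : ℂ) :
    ‖fderiv ℝ (e0 b k) z 1‖^2 + ‖fderiv ℝ (e0 b k) z Complex.I‖^2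
      = (2*(k:ℝ)^2 * (Complex.normSq z)^(k-1) - (k:ℝ)*b*(Complex.normSq z)^k
          + b^2/4*(Complex.normSq z)^(k+1))
        * Real.exp (-(b/2) * Complex.normSq z) / (π * (Nat.factorial k : ℝ) * (2/b)^(k+1)) := by
  set C : ℝ := π * (Nat.factorial k : ℝ) * (2/b)^(k+1) with hCdef
  have hC : (0:ℝ) ≤ C := by rw [hCdef]; positivity
  set s : ℝ := Complex.normSq z with hs
  set w : ℂ := (starRingEnd ℂ) z with hw
  set X1 : ℂ := (k:ℂ) * z^(k-1) - (b:ℂ)/4 * z^k * (z + w) with hX1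
  set T : ℂ := (k:ℂ) * z^(k-1) - (b:ℂ)/4 * z^k * (w - z) with hT
  have h1 : fderiv ℝ (e0 b k) z 1 = X1 * Complex.exp (-(b:ℂ)/4 * (z*w)) / ((C.sqrt : ℝ) : ℂ) := by
    rw [e0_fderiv, hX1, hw]
    simp only [map_one, mul_one, one_mul]
    rw [← hCdef]
  have hI : fderiv ℝ (e0 b k) z Complex.I
      = Complex.I * T * Complex.exp (-(b:ℂ)/4 * (z*w)) / ((C.sqrt : ℝ) : ℂ) := by
    rw [e0_fderiv, hT, hw, Complex.conj_I]
    ring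
  have hE : ‖Complex.exp (-(b:ℂ)/4 * (z*w))‖ = Real.exp (-(b/4) * s) := by
    rw [hw, Complex.mul_conj, ← hs,
      show -(b:ℂ)/4 * (s:ℂ) = ((-(b/4) * s : ℝ) : ℂ) by push_cast; ring,
      Complex.norm_exp, Complex.ofReal_re]
  have hnc : ‖((C.sqrt : ℝ) : ℂ)‖ = C.sqrt := by
    rw [Complex.norm_real, Real.norm_eq_abs, _root_.abs_of_nonneg (Real.sqrt_nonneg _)]
  have hzw : z * w = (s:ℂ) := by rw [hw, Complex.mul_conj, hs]
  have hsum : Complex.normSq X1 + Complex.normSq T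
      = 2*(k:ℝ)^2 * s^(k-1) - (k:ℝ)*b*s^k + b^2/4*s^(k+1) := by
    have hcX1 : (starRingEnd ℂ) X1 = (k:ℂ) * w^(k-1) - (b:ℂ)/4 * w^k * (w + z) := by
      rw [hX1, hw]
      simp [map_sub, map_mul, map_pow, map_add, map_div₀, map_ofNat, Complex.conj_ofReal]
    have hcT : (starRingEnd ℂ) T = (k:ℂ) * w^(k-1) - (b:ℂ)/4 * w^k * (z - w) := by
      rw [hT, hw]
      simp [map_sub, map_mul, map_pow, map_div₀, map_ofNat, Complex.conj_ofReal]
    apply Complex.ofReal_inj.mp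
    push_cast
    rw [← Complex.mul_conj X1, ← Complex.mul_conj T, hcX1, hcT, hX1, hT]
    linear_combination key_alg (b:ℂ) k z w (s:ℂ) hzw
  rw [h1, hI, norm_div, norm_div, norm_mul, norm_mul, norm_mul, hE, hnc, Complex.norm_I, one_mul,
    div_pow, div_pow, mul_pow, mul_pow, Real.sq_sqrt hC]
  rw [show ‖X1‖^2 = Complex.normSq X1 by rw [Complex.sq_norm],
      show ‖T‖^2 = Complex.normSq T by rw [Complex.sq_norm]]
  rw [← add_div, ← add_mul, hsum,
    show Real.exp (-(b/4) * s) ^ 2 = Real.exp (-(b/2) * s) by rw [sq, ← Real.exp_add]; ring_nf]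

lemma mom_aux (b : ℝ) (n : ℕ) (r : ℝ) (hr : r ∈ Set.Ioi (0:ℝ)) :
    r ^ ((2*n+1 : ℝ)) * Real.exp (-(b/2) * r ^ (2:ℝ))
      = r * (r^2)^n * Real.exp (-(b/2) * r^2) := by
  rw [Real.rpow_two, show (2*(n:ℝ)+1) = ((2*n+1 : ℕ) : ℝ) by push_cast; ring,
    Real.rpow_natCast]
  ring

lemma mom (b : ℝ) (hb : 0 < b) (n : ℕ) :
    ∫ r in Set.Ioi (0:ℝ), r * (r^2)^n * Real.exp (-(b/2) * r^2)
      = (1/2) * (2/b)^(n+1) * (Nat.factorial n : ℝ) := by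
  rw [← setIntegral_congr_fun measurableSet_Ioi (mom_aux b n),
    _root_.integral_rpow_mul_exp_neg_mul_rpow (by norm_num)
      (by nlinarith [Nat.cast_nonneg (α := ℝ) n]) (by positivity)]
  rw [show (-(2*(n:ℝ)+1+1)/2 : ℝ) = -((n:ℝ)+1) by ring,
    show ((2*(n:ℝ)+1+1)/2 : ℝ) = ((n:ℝ)+1) by ring, Real.Gamma_nat_eq_factorial,
    show ((n:ℝ)+1) = ((n+1 : ℕ) : ℝ) by push_cast; ring,
    Real.rpow_neg (by positivity), Real.rpow_natCast, ← inv_pow, inv_div]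
  ring

lemma momInt (b : ℝ) (hb : 0 < b) (n : ℕ) :
    IntegrableOn (fun r : ℝ => r * (r^2)^n * Real.exp (-(b/2) * r^2)) (Set.Ioi 0) :=
  (integrableOn_rpow_mul_exp_neg_mul_rpow (p := 2) (s := 2*n+1)
    (by nlinarith [Nat.cast_nonneg (α := ℝ) n]) two_pos
    (by positivity : (0:ℝ) < b/2)).congr_fun (mom_aux b n) measurableSet_Ioi

lemma hkey_fact (b : ℝ) (k : ℕ) :
    (k:ℝ)^2 * ((2/b)^(k-1+1) * ((k-1).factorial : ℝ))
      = (k:ℝ) * ((2/b)^k * (k.factorial : ℝ)) := by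
  cases k with
  | zero => simp
  | succ j => simp only [Nat.add_sub_cancel, Nat.factorial_succ]; push_cast; ring

/-- `‖∇e_{0k}‖²_{L²(ℝ²)} = (k+1)b/2`, i.e. `‖∇e_{0k}‖_{L²} = √((k+1)b/2) → ∞` as `k → ∞`,
even though `D e_{0k} = 0` (so `‖D e_{0k}‖_{L²} = 0`). -/
theorem e0_gradient_norm (b : ℝ) (hb : 0 < b) (k : ℕ) :
    (∫ z : ℂ, (‖fderiv ℝ (e0 b k) z 1‖ ^ 2 + ‖fderiv ℝ (e0 b k) z Complex.I‖ ^ 2))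
        = ((k : ℝ) + 1) * b / 2 ∧
      ∀ z : ℂ, Dop b (e0 b k) z = 0 := by
  constructor
  · set C : ℝ := π * (Nat.factorial k : ℝ) * (2/b)^(k+1) with hCdef
    have hC0 : C ≠ 0 := by rw [hCdef]; positivity
    set f : ℝ → ℝ := fun r =>
      (2*(k:ℝ)^2 * (r^2)^(k-1) - (k:ℝ)*b*(r^2)^k + b^2/4*(r^2)^(k+1))
        * Real.exp (-(b/2) * r^2) / C with hf
    have hpt : ∀ z : ℂ, ‖fderiv ℝ (e0 b k) z 1‖^2 + ‖fderiv ℝ (e0 b k) z Complex.I‖^2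
        = f ‖z‖ := by
      intro z
      rw [grad_sq b hb k z, ← hCdef]
      show _ = (2*(k:ℝ)^2 * (‖z‖^2)^(k-1) - (k:ℝ)*b*(‖z‖^2)^k + b^2/4*(‖z‖^2)^(k+1))
        * Real.exp (-(b/2) * ‖z‖^2) / C
      rw [show ‖z‖^2 = Complex.normSq z by rw [Complex.sq_norm]]
    rw [MeasureTheory.integral_congr_ae (Filter.Eventually.of_forall hpt)]
    rw [MeasureTheory.integral_fun_norm_addHaar volume f]
    simp only [Complex.finrank_real_complex, MeasureTheory.measureReal_def, Complex.volume_ball, one_pow, ENNReal.ofReal_one,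
      one_mul, ENNReal.coe_toReal, smul_eq_mul, nsmul_eq_mul, Nat.cast_ofNat, pow_one,
      NNReal.coe_real_pi]
    have hdecomp : ∀ r : ℝ, r ^ (2-1) * f r
        = (2*(k:ℝ)^2/C) * (r*(r^2)^(k-1)*Real.exp (-(b/2)*r^2))
          + ((-((k:ℝ)*b)/C) * (r*(r^2)^k*Real.exp (-(b/2)*r^2))
            + (b^2/4/C) * (r*(r^2)^(k+1)*Real.exp (-(b/2)*r^2))) := by
      intro r
      simp only [hf, pow_one, smul_eq_mul, div_eq_mul_inv]
      ring
    rw [MeasureTheory.setIntegral_congr_fun measurableSet_Ioi (fun r _ => hdecomp r)]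
    have h1 : IntegrableOn (fun r : ℝ =>
        2*(k:ℝ)^2/C * (r*(r^2)^(k-1)*Real.exp (-(b/2)*r^2))) (Set.Ioi 0) :=
      (momInt b hb (k-1)).const_mul _
    have h2 : IntegrableOn (fun r : ℝ =>
        -((k:ℝ)*b)/C * (r*(r^2)^k*Real.exp (-(b/2)*r^2))) (Set.Ioi 0) :=
      (momInt b hb k).const_mul _
    have h3 : IntegrableOn (fun r : ℝ =>
        b^2/4/C * (r*(r^2)^(k+1)*Real.exp (-(b/2)*r^2))) (Set.Ioi 0) :=
      (momInt b hb (k+1)).const_mul _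
    have h23 : IntegrableOn (fun r : ℝ =>
        -((k:ℝ)*b)/C * (r*(r^2)^k*Real.exp (-(b/2)*r^2))
          + b^2/4/C * (r*(r^2)^(k+1)*Real.exp (-(b/2)*r^2))) (Set.Ioi 0) := h2.add h3
    rw [MeasureTheory.integral_add h1 h23, MeasureTheory.integral_add h2 h3,
      MeasureTheory.integral_const_mul, MeasureTheory.integral_const_mul,
      MeasureTheory.integral_const_mul, mom b hb (k-1), mom b hb k, mom b hb (k+1)]
    have hA : (2*(k:ℝ)^2/C) * ((1/2) * (2/b)^(k-1+1) * ((k-1).factorial : ℝ))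
        = (k:ℝ) * (2/b)^k * (k.factorial : ℝ) / C := by
      linear_combination (1/C) * hkey_fact b k
    rw [hA, hCdef]
    have hb' : b ≠ 0 := ne_of_gt hb
    have hπ : π ≠ 0 := Real.pi_ne_zero
    have hfk : ((Nat.factorial k : ℝ)) ≠ 0 := by positivity
    have h2b : ((2:ℝ)/b) ≠ 0 := by positivity
    rw [pow_succ ((2:ℝ)/b) (k+1), pow_succ ((2:ℝ)/b) k]
    push_cast [Nat.factorial_succ]
    field_simp
    ring
  · intro z
    have hc1 := e0_fderiv b k z 1
    have hcI := e0_fderiv b k z Complex.I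
    rw [Dop, dzbar, hc1, hcI, e0_eq']
    simp only [map_one, Complex.conj_I, mul_one, one_mul]
    set c : ℂ := ((Real.sqrt (π * (Nat.factorial k : ℝ) * (2 / b) ^ (k + 1)) : ℝ) : ℂ)
    field_simp
    ring_nf
    simp [Complex.I_sq]
    try ring
end

section
/- Let b > 0 and let φ: ℝ² → ℂ be smooth and radially symmetric, φ(x) = φ(|x|). Then the kernel Π̄_φ(x,y) = φ(x−y)·exp(−ibΩ(x,y)/2) satisfies (H_x − conj(H)_y) Π̄_φ(x,y) = 2ib (x−y)ᵀ J (∇φ)(x−y) · exp(−ibΩ(x,y)/2) = 0 for all x, y ∈ ℝ², where J = [[0,1],[−1,0]] and Ω(x,y) = x¹y² − x²y¹. -/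
open Complex

/-- The reduced Landau Hamiltonian `H = D*D`. -/
noncomputable def Hop (b : ℝ) (f : ℂ → ℂ) : ℂ → ℂ := Dstarop b (Dop b f)

/-- The complex-conjugate Hamiltonian `H̄ = conj(D*)conj(D)`, acting as
`H̄ f = conj (H (conj f))`. -/
noncomputable def Hbarop (b : ℝ) (f : ℂ → ℂ) : ℂ → ℂ :=
  fun z => (starRingEnd ℂ) (Hop b (fun w => (starRingEnd ℂ) (f w)) z)

/-- The symplectic form `Ω(x,y) = x¹y² − x²y¹` on `ℝ² ≅ ℂ`. -/
def Omega (x y : ℂ) : ℝ := x.re * y.im - x.im * y.re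


noncomputable def Eb (b : ℝ) (y x' : ℂ) : ℂ :=
  Complex.exp (-(Complex.I * (b : ℂ) * ((Omega x' y : ℝ) : ℂ)) / 2)

noncomputable def Lb (b : ℝ) (y : ℂ) : ℂ →L[ℝ] ℂ :=
  (-(Complex.I * (b : ℂ)) / 2) • (Complex.ofRealCLM.comp (y.im • Complex.reCLM - y.re • Complex.imCLM))

lemma Lb_apply (b : ℝ) (y v : ℂ) :
    Lb b y v = -(Complex.I * b) / 2 * ((v.re : ℂ) * y.im - (v.im : ℂ) * y.re) := by
  simp only [Lb, ContinuousLinearMap.smul_apply, ContinuousLinearMap.comp_apply,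
    ContinuousLinearMap.sub_apply, ContinuousLinearMap.smul_apply, Complex.ofRealCLM_apply,
    Complex.reCLM_apply, Complex.imCLM_apply, smul_eq_mul]
  push_cast
  ring

lemma Eb_eq (b : ℝ) (y x' : ℂ) : Eb b y x' = Complex.exp (Lb b y x') := by
  rw [Lb_apply]; unfold Eb Omega; push_cast; ring_nf

lemma hasFDerivAt_Eb (b : ℝ) (y x : ℂ) :
    HasFDerivAt (Eb b y) (Eb b y x • Lb b y) x := by
  have : (fun x' => Complex.exp (Lb b y x')) = Eb b y := by
    funext x'; rw [Eb_eq]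
  rw [Eb_eq b y x]
  rw [← this]
  exact (Complex.hasDerivAt_exp (Lb b y x)).comp_hasFDerivAt x (Lb b y).hasFDerivAt

lemma hasFDerivAt_shift (g : ℂ → ℂ) (y x : ℂ) (hg : DifferentiableAt ℝ g (x - y)) :
    HasFDerivAt (fun x' => g (x' - y)) (fderiv ℝ g (x - y)) x := by
  have h := hg.hasFDerivAt.comp x ((hasFDerivAt_id x).sub_const y)
  simpa [Function.comp_def] using h

lemma kernel_fderiv_apply (b : ℝ) (y x : ℂ) (g : ℂ → ℂ) (hg : DifferentiableAt ℝ g (x - y)) (v : ℂ) :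
    fderiv ℝ (fun x' => g (x' - y) * Eb b y x') x v
      = fderiv ℝ g (x - y) v * Eb b y x
        + g (x - y) * Eb b y x * (-(Complex.I * b) / 2 * ((v.re : ℂ) * y.im - (v.im : ℂ) * y.re)) := by
  have h := ((hasFDerivAt_shift g y x hg).mul (hasFDerivAt_Eb b y x)).fderiv
  rw [show (fun x' => g (x' - y) * Eb b y x') = (fun x' => g (x' - y)) * Eb b y from rfl, h]
  simp [Lb_apply, smul_eq_mul]
  ring

lemma conj_eq (z : ℂ) : (starRingEnd ℂ) z = (z.re : ℂ) - (z.im : ℂ) * Complex.I := by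
  simp [Complex.ext_iff]

lemma Dop_kernel (b : ℝ) (y : ℂ) (g : ℂ → ℂ) (hg : Differentiable ℝ g) :
    Dop b (fun x' => g (x' - y) * Eb b y x') = fun x' => (Dop b g) (x' - y) * Eb b y x' := by
  funext x'
  unfold Dop dzbar
  rw [kernel_fderiv_apply b y x' g (hg _) 1, kernel_fderiv_apply b y x' g (hg _) Complex.I]
  simp only [Complex.one_re, Complex.one_im, Complex.I_re, Complex.I_im]
  have hy : (y.re : ℂ) + (y.im : ℂ) * Complex.I = y := Complex.re_add_im y
  push_cast
  linear_combination (-(Complex.I*b)/2 * g (x'-y) * Eb b y x') * hy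
    + (-(b:ℂ) * (y.re:ℂ) / 2 * g (x'-y) * Eb b y x') * Complex.I_mul_I
    + ((Complex.I + 1)/2 * (b:ℂ) * g (x'-y) * Eb b y x') * hy

lemma Dstarop_kernel (b : ℝ) (y x : ℂ) (g : ℂ → ℂ) (hg : DifferentiableAt ℝ g (x - y)) :
    Dstarop b (fun x' => g (x' - y) * Eb b y x') x = (Dstarop b g) (x - y) * Eb b y x := by
  unfold Dstarop dz
  rw [kernel_fderiv_apply b y x g hg 1, kernel_fderiv_apply b y x g hg Complex.I]
  simp only [Complex.one_re, Complex.one_im, Complex.I_re, Complex.I_im]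
  rw [conj_eq x, conj_eq (x - y)]
  push_cast
  simp only [Complex.sub_re, Complex.sub_im]
  push_cast
  linear_combination (-(y.re:ℂ) / 2 * (b:ℂ) * g (x-y) * Eb b y x) * Complex.I_mul_I

lemma hasFDerivAt_A (g : ℂ → ℂ) (hg : ContDiff ℝ (⊤ : ℕ∞) g) (w u : ℂ) :
    HasFDerivAt (fun z => fderiv ℝ g z w)
      ((ContinuousLinearMap.apply ℝ ℂ w).comp (fderiv ℝ (fderiv ℝ g) u)) u := by
  have h1 : HasFDerivAt (fderiv ℝ g) (fderiv ℝ (fderiv ℝ g) u) u :=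
    ((hg.fderiv_right (m := (⊤ : ℕ∞)) (by simp)).differentiable (by simp) u).hasFDerivAt
  exact ((ContinuousLinearMap.apply ℝ ℂ w).hasFDerivAt).comp u h1

lemma D2_eq (g : ℂ → ℂ) (hg : ContDiff ℝ (⊤ : ℕ∞) g) (w u v : ℂ) :
    fderiv ℝ (fun z => fderiv ℝ g z w) u v = fderiv ℝ (fderiv ℝ g) u v w := by
  rw [(hasFDerivAt_A g hg w u).fderiv]; rfl

lemma diff_A (g : ℂ → ℂ) (hg : ContDiff ℝ (⊤ : ℕ∞) g) (w : ℂ) :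
    Differentiable ℝ (fun z => fderiv ℝ g z w) :=
  fun u => (hasFDerivAt_A g hg w u).differentiableAt

lemma diff_Dop (b : ℝ) (g : ℂ → ℂ) (hg : ContDiff ℝ (⊤ : ℕ∞) g) :
    Differentiable ℝ (Dop b g) := by
  have e : Dop b g = fun z => -(fderiv ℝ g z 1 + Complex.I * fderiv ℝ g z Complex.I)
      - ((b:ℂ)/2) * (z * g z) := by
    funext z; unfold Dop dzbar; ring
  rw [e]
  exact (((diff_A g hg 1).add ((diff_A g hg Complex.I).const_mul Complex.I)).neg).sub
    ((differentiable_id.mul (hg.differentiable (by simp))).const_mul _)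

lemma fderiv_Dop_apply (b : ℝ) (g : ℂ → ℂ) (hg : ContDiff ℝ (⊤ : ℕ∞) g) (u v : ℂ) :
    fderiv ℝ (Dop b g) u v
      = -(fderiv ℝ (fderiv ℝ g) u v 1 + Complex.I * fderiv ℝ (fderiv ℝ g) u v Complex.I)
        - ((b:ℂ)/2) * v * g u - ((b:ℂ)/2) * u * fderiv ℝ g u v := by
  have e : Dop b g = fun z => -(fderiv ℝ g z 1 + Complex.I * fderiv ℝ g z Complex.I)
      - ((b:ℂ)/2) * (z * g z) := by
    funext z; unfold Dop dzbar; ring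
  rw [e]
  have h1 := hasFDerivAt_A g hg 1 u
  have hI := hasFDerivAt_A g hg Complex.I u
  have hg' := (hg.differentiable (by simp) u).hasFDerivAt
  have H := ((h1.add (hI.const_mul Complex.I)).neg).sub
    (((hasFDerivAt_id u).mul hg').const_mul ((b:ℂ)/2))
  have hf := H.fderiv
  simp only [id_eq, Pi.mul_def, Pi.add_def, Pi.neg_def, Pi.sub_def] at hf
  rw [hf]
  simp only [ContinuousLinearMap.neg_apply, ContinuousLinearMap.smul_apply,
    ContinuousLinearMap.coe_smul', Pi.smul_apply, ContinuousLinearMap.sub_apply,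
    ContinuousLinearMap.add_apply, ContinuousLinearMap.comp_apply, ContinuousLinearMap.apply_apply,
    ContinuousLinearMap.coe_comp', Function.comp_apply, smul_eq_mul,
    ContinuousLinearMap.coe_id', id_eq]
  ring

lemma hop_explicit (b : ℝ) (g : ℂ → ℂ) (hg : ContDiff ℝ (⊤ : ℕ∞) g) (u : ℂ) :
    Dstarop b (Dop b g) u =
      -fderiv ℝ (fderiv ℝ g) u 1 1 - fderiv ℝ (fderiv ℝ g) u Complex.I Complex.I
      - Complex.I * fderiv ℝ (fderiv ℝ g) u 1 Complex.I
      + Complex.I * fderiv ℝ (fderiv ℝ g) u Complex.I 1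
      - (b:ℂ) * g u
      - ((b:ℂ)/2) * u * fderiv ℝ g u 1 + ((b:ℂ)/2) * Complex.I * u * fderiv ℝ g u Complex.I
      + ((b:ℂ)/2) * (starRingEnd ℂ u) * fderiv ℝ g u 1
      + ((b:ℂ)/2) * Complex.I * (starRingEnd ℂ u) * fderiv ℝ g u Complex.I
      + ((b:ℂ)^2/4) * u * (starRingEnd ℂ u) * g u := by
  unfold Dstarop dz
  rw [fderiv_Dop_apply b g hg u 1, fderiv_Dop_apply b g hg u Complex.I]
  unfold Dop dzbar
  linear_combination (fderiv ℝ (fderiv ℝ g) u Complex.I Complex.I + ((b:ℂ)/2) * g u) * Complex.I_mul_I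

noncomputable def conjCLM : ℂ →L[ℝ] ℂ := ↑Complex.conjCLE

lemma conjCLM_apply (z : ℂ) : conjCLM z = (starRingEnd ℂ) z := rfl

lemma hasFDerivAt_chi (φ : ℂ → ℂ) (hφ : ContDiff ℝ (⊤ : ℕ∞) φ) (w : ℂ) :
    HasFDerivAt (fun z => (starRingEnd ℂ) (φ (-z)))
      (conjCLM.comp ((fderiv ℝ φ (-w)).comp (-(ContinuousLinearMap.id ℝ ℂ)))) w := by
  have hneg : HasFDerivAt (fun z : ℂ => -z) (-(ContinuousLinearMap.id ℝ ℂ)) w := by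
    exact (hasFDerivAt_id w).neg
  have h1 : HasFDerivAt (fun z : ℂ => φ (-z))
      ((fderiv ℝ φ (-w)).comp (-(ContinuousLinearMap.id ℝ ℂ))) w := by
    have := ((hφ.differentiable (by simp) (-w)).hasFDerivAt).comp w hneg
    simpa [Function.comp_def] using this
  have := (conjCLM.hasFDerivAt).comp w h1
  simpa [Function.comp_def, conjCLM_apply] using this

lemma contDiff_chi (φ : ℂ → ℂ) (hφ : ContDiff ℝ (⊤ : ℕ∞) φ) :
    ContDiff ℝ (⊤ : ℕ∞) (fun z => (starRingEnd ℂ) (φ (-z))) := by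
  have : ContDiff ℝ (⊤ : ℕ∞) (fun z : ℂ => φ (-z)) := hφ.comp contDiff_neg
  exact conjCLM.contDiff.comp this

lemma fderiv_chi_apply (φ : ℂ → ℂ) (hφ : ContDiff ℝ (⊤ : ℕ∞) φ) (w v : ℂ) :
    fderiv ℝ (fun z => (starRingEnd ℂ) (φ (-z))) w v
      = -(starRingEnd ℂ) (fderiv ℝ φ (-w) v) := by
  rw [(hasFDerivAt_chi φ hφ w).fderiv]
  simp [conjCLM_apply]

lemma fderiv2_chi (φ : ℂ → ℂ) (hφ : ContDiff ℝ (⊤ : ℕ∞) φ) (u v w : ℂ) :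
    fderiv ℝ (fderiv ℝ (fun z => (starRingEnd ℂ) (φ (-z)))) (-u) v w
      = (starRingEnd ℂ) (fderiv ℝ (fderiv ℝ φ) u v w) := by
  rw [← D2_eq _ (contDiff_chi φ hφ) w (-u) v]
  have e : (fun z => fderiv ℝ (fun z' => (starRingEnd ℂ) (φ (-z'))) z w)
      = fun z => -(conjCLM (fderiv ℝ φ (-z) w)) := by
    funext z; rw [fderiv_chi_apply φ hφ z w, conjCLM_apply]
  rw [e]
  have hneg : HasFDerivAt (fun z : ℂ => -z) (-(ContinuousLinearMap.id ℝ ℂ)) (-u) := by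
    exact (hasFDerivAt_id (-u)).neg
  have hin : HasFDerivAt (fun z : ℂ => fderiv ℝ φ (-z) w)
      (((ContinuousLinearMap.apply ℝ ℂ w).comp (fderiv ℝ (fderiv ℝ φ) u)).comp
        (-(ContinuousLinearMap.id ℝ ℂ))) (-u) := by
    have hA : HasFDerivAt (fun z => fderiv ℝ φ z w)
        ((ContinuousLinearMap.apply ℝ ℂ w).comp (fderiv ℝ (fderiv ℝ φ) u)) (-(-u)) := by
      rw [neg_neg]; exact hasFDerivAt_A φ hφ w u
    have := hA.comp (-u) hneg
    simpa [Function.comp_def] using this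
  have H := ((-conjCLM).hasFDerivAt).comp (-u) hin
  have hf := H.fderiv
  simp only [Function.comp_def, ContinuousLinearMap.neg_apply] at hf
  rw [hf]
  simp [conjCLM_apply]

lemma schwarz (φ : ℂ → ℂ) (hφ : ContDiff ℝ (⊤ : ℕ∞) φ) (u : ℂ) :
    fderiv ℝ (fderiv ℝ φ) u 1 Complex.I = fderiv ℝ (fderiv ℝ φ) u Complex.I 1 :=
  (hφ.contDiffAt.isSymmSndFDerivAt (by rw [minSmoothness_of_isRCLikeNormedField]; exact WithTop.coe_le_coe.mpr le_top)) 1 Complex.I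

lemma radial_angular (φ : ℂ → ℂ) (hφ : ContDiff ℝ (⊤ : ℕ∞) φ)
    (hrad : ∀ z w : ℂ, ‖z‖ = ‖w‖ → φ z = φ w) (u : ℂ) :
    (u.re : ℂ) * fderiv ℝ φ u Complex.I - (u.im : ℂ) * fderiv ℝ φ u 1 = 0 := by
  have hγ : HasDerivAt (fun t : ℝ => Complex.exp (Complex.I * t) * u) (Complex.I * u) 0 := by
    have h1 : HasDerivAt (fun z : ℂ => Complex.exp (Complex.I * z) * u)
        (Complex.I * Complex.exp (Complex.I * 0) * u) 0 := by
      have h2 : HasDerivAt (fun z : ℂ => Complex.I * z) Complex.I 0 := by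
        simpa using (hasDerivAt_id (0:ℂ)).const_mul Complex.I
      have h3 := ((Complex.hasDerivAt_exp (Complex.I * 0)).comp 0 h2).mul_const u
      simpa [mul_comm] using h3
    have h1' : HasDerivAt (fun z : ℂ => Complex.exp (Complex.I * z) * u)
        (Complex.I * Complex.exp (Complex.I * 0) * u) ((0:ℝ):ℂ) := by
      simpa using h1
    have h4 := h1'.comp_ofReal
    simpa using h4
  have hc : HasDerivAt (fun t : ℝ => φ (Complex.exp (Complex.I * t) * u))
      (fderiv ℝ φ u (Complex.I * u)) 0 := by
    have hf : HasFDerivAt φ (fderiv ℝ φ u) (Complex.exp (Complex.I * (0:ℝ)) * u) := by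
      simpa using (hφ.differentiable (by simp) u).hasFDerivAt
    simpa [Function.comp_def] using hf.comp_hasDerivAt 0 hγ
  have hconst : (fun t : ℝ => φ (Complex.exp (Complex.I * t) * u)) = fun _ => φ u := by
    funext t
    refine hrad _ _ ?_
    simp [map_mul, Complex.norm_exp]
  rw [hconst] at hc
  have h0 : fderiv ℝ φ u (Complex.I * u) = 0 := hc.unique (hasDerivAt_const 0 (φ u))
  have hlin : fderiv ℝ φ u (Complex.I * u)
      = (u.re : ℝ) • fderiv ℝ φ u Complex.I + (-u.im : ℝ) • fderiv ℝ φ u 1 := by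
    have : Complex.I * u = (u.re : ℝ) • Complex.I + (-u.im : ℝ) • (1 : ℂ) := by
      simp [Complex.real_smul, Complex.ext_iff]
    rw [this, map_add, map_smul, map_smul]
  rw [hlin] at h0
  simp only [Complex.real_smul] at h0
  push_cast at h0 ⊢
  linear_combination h0

lemma fderiv_chi_apply' (φ : ℂ → ℂ) (hφ : ContDiff ℝ (⊤ : ℕ∞) φ) (u v : ℂ) :
    fderiv ℝ (fun z => (starRingEnd ℂ) (φ (-z))) (-u) v
      = -(starRingEnd ℂ) (fderiv ℝ φ u v) := by
  rw [fderiv_chi_apply φ hφ, neg_neg]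

lemma conj_Eb (b : ℝ) (x y : ℂ) : (starRingEnd ℂ) (Eb b x y) = Eb b y x := by
  unfold Eb
  rw [← Complex.exp_conj]
  congr 1
  simp only [map_div₀, map_neg, map_mul, Complex.conj_I, Complex.conj_ofReal, map_ofNat]
  unfold Omega
  push_cast
  ring


/-- For smooth radially symmetric `φ`, the kernel `Π̄_φ(x,y) = φ(x−y)·e^{−ibΩ(x,y)/2}`
satisfies `(H_x − H̄_y)Π̄_φ(x,y) = 2ib (x−y)ᵀJ(∇φ)(x−y)·e^{−ibΩ(x,y)/2} = 0`, where
`vᵀJ∇φ(v) = v¹∂₂φ(v) − v²∂₁φ(v)`. -/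
theorem stationary_minus_phase (b : ℝ) (hb : 0 < b) (φ : ℂ → ℂ)
    (hφ : ContDiff ℝ (⊤ : ℕ∞) φ)
    (hrad : ∀ z w : ℂ, ‖z‖ = ‖w‖ → φ z = φ w) (x y : ℂ) :
    (Hop b (fun x' => φ (x' - y) *
          Complex.exp (-(Complex.I * (b : ℂ) * ((Omega x' y : ℝ) : ℂ)) / 2)) x
        - Hbarop b (fun y' => φ (x - y') *
          Complex.exp (-(Complex.I * (b : ℂ) * ((Omega x y' : ℝ) : ℂ)) / 2)) y
      = 2 * Complex.I * (b : ℂ) *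
          (((x - y).re : ℂ) * fderiv ℝ φ (x - y) Complex.I
            - ((x - y).im : ℂ) * fderiv ℝ φ (x - y) 1) *
          Complex.exp (-(Complex.I * (b : ℂ) * ((Omega x y : ℝ) : ℂ)) / 2)) ∧
    (2 * Complex.I * (b : ℂ) *
        (((x - y).re : ℂ) * fderiv ℝ φ (x - y) Complex.I
          - ((x - y).im : ℂ) * fderiv ℝ φ (x - y) 1) *
        Complex.exp (-(Complex.I * (b : ℂ) * ((Omega x y : ℝ) : ℂ)) / 2) = 0) := by
  have hφd : Differentiable ℝ φ := hφ.differentiable (by simp)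
  have hχ : ContDiff ℝ (⊤ : ℕ∞) (fun w => (starRingEnd ℂ) (φ (-w))) := contDiff_chi φ hφ
  constructor
  · -- x-side
    have hxside : Hop b (fun x' => φ (x' - y) *
        Complex.exp (-(Complex.I * (b : ℂ) * ((Omega x' y : ℝ) : ℂ)) / 2)) x
        = Dstarop b (Dop b φ) (x - y) * Eb b y x := by
      show Dstarop b (Dop b (fun x' => φ (x' - y) * Eb b y x')) x = _
      rw [Dop_kernel b y φ hφd]
      exact Dstarop_kernel b y x (Dop b φ) ((diff_Dop b φ hφ) (x - y))
    -- y-side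
    have hcf : (fun y' => (starRingEnd ℂ) (φ (x - y') *
          Complex.exp (-(Complex.I * (b : ℂ) * ((Omega x y' : ℝ) : ℂ)) / 2)))
        = fun y' => (starRingEnd ℂ) (φ (-(y' - x))) * Eb b x y' := by
      funext y'
      rw [map_mul, neg_sub]
      congr 1
      rw [← Complex.exp_conj]
      unfold Eb
      congr 1
      simp only [map_div₀, map_neg, map_mul, Complex.conj_I, Complex.conj_ofReal, map_ofNat]
      unfold Omega
      push_cast
      ring
    have hyside : Hbarop b (fun y' => φ (x - y') *
        Complex.exp (-(Complex.I * (b : ℂ) * ((Omega x y' : ℝ) : ℂ)) / 2)) y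
        = (starRingEnd ℂ)
            (Dstarop b (Dop b (fun w => (starRingEnd ℂ) (φ (-w)))) (y - x) * Eb b x y) := by
      show (starRingEnd ℂ) (Hop b (fun y' => (starRingEnd ℂ) (φ (x - y') *
          Complex.exp (-(Complex.I * (b : ℂ) * ((Omega x y' : ℝ) : ℂ)) / 2))) y) = _
      congr 1
      rw [hcf]
      show Dstarop b (Dop b (fun y' =>
        (fun w => (starRingEnd ℂ) (φ (-w))) (y' - x) * Eb b x y')) y = _
      rw [Dop_kernel b x _ (hχ.differentiable (by simp))]
      exact Dstarop_kernel b x y _ ((diff_Dop b _ hχ) (y - x))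
    rw [hxside, hyside, map_mul, conj_Eb]
    rw [show y - x = -(x - y) by ring]
    rw [hop_explicit b φ hφ (x - y), hop_explicit b _ hχ (-(x - y))]
    simp only [fderiv2_chi φ hφ (x - y), fderiv_chi_apply' φ hφ (x - y), neg_neg, map_neg]
    simp only [map_add, map_sub, map_mul, map_neg, map_pow, map_div₀, map_ofNat,
      Complex.conj_conj, Complex.conj_I, Complex.conj_ofReal]
    have hs := schwarz φ hφ (x - y)
    have hcu : (starRingEnd ℂ) x - (starRingEnd ℂ) y
        = ((x - y).re : ℂ) - ((x - y).im : ℂ) * Complex.I := by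
      rw [← map_sub]; exact conj_eq (x - y)
    have hu := Complex.re_add_im (x - y)
    simp only [Eb]
    linear_combination (-2 * Complex.I * Complex.exp (-(Complex.I * (b : ℂ) * ((Omega x y : ℝ) : ℂ)) / 2)) * hs
      + (Complex.exp (-(Complex.I * (b : ℂ) * ((Omega x y : ℝ) : ℂ)) / 2) * (b:ℂ) * (fderiv ℝ φ (x - y) 1 + Complex.I * fderiv ℝ φ (x - y) Complex.I)) * hcu
      + (Complex.exp (-(Complex.I * (b : ℂ) * ((Omega x y : ℝ) : ℂ)) / 2) * (b:ℂ) * (fderiv ℝ φ (x - y) 1 - Complex.I * fderiv ℝ φ (x - y) Complex.I)) * hu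
  · have h0 := radial_angular φ hφ hrad (x - y)
    rw [h0, mul_zero, zero_mul]
end
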